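/- Suppose $|p_m(y|\theta) - p(y|\theta)| \leq p(y|\theta)C_m(\theta)/\sqrt{m}$ for all $\theta$ with $C := \sup_\theta C_m(\theta) < \infty$, and $|p_m(y) - p(y)| \leq p(y)C/\sqrt{m}$, with $p(y), p_m(y) > 0$. Define $\pi(\theta) = p(y|\theta)p(\theta)/p(y)$ and $\pi_m(\theta) = p_m(y|\theta)p(\theta)/p_m(y)$. Then for every $\theta$, $|\pi_m(\theta) - \pi(\theta)| \leq \pi(\theta)\frac{1}{\sqrt{m}}\cdot\frac{p(y)}{p_m(y)}\left(C_m(\theta) + C\right)$. -/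
import Mathlib


/-- Pointwise perturbation bound for the posterior:
`|π_m(θ) - π(θ)| ≤ π(θ) (p(y)/p_m(y)) (C_m(θ) + C)/√m`. -/
theorem stmt_13 {Θ : Type*} (plik pmlik prior Cm : Θ → ℝ) (C py pmy : ℝ) (m : ℕ)
    (hm : 1 ≤ m)
    (hpnn : ∀ θ, 0 ≤ plik θ) (hprnn : ∀ θ, 0 ≤ prior θ)
    (hpy : 0 < py) (hpmy : 0 < pmy)
    (hCsup : ∀ θ, Cm θ ≤ C)
    (hbound : ∀ θ, |pmlik θ - plik θ| ≤ plik θ * Cm θ / Real.sqrt m)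
    (hglobal : |pmy - py| ≤ py * C / Real.sqrt m) :
    ∀ θ, |pmlik θ * prior θ / pmy - plik θ * prior θ / py| ≤
      plik θ * prior θ / py * (1 / Real.sqrt m) * (py / pmy * (Cm θ + C)) := by
  intro θ
  have hs : 0 < Real.sqrt m := Real.sqrt_pos.2 (by exact_mod_cast hm)
  have ha := hpnn θ
  have hr := hprnn θ
  have hdecomp : pmlik θ * prior θ / pmy - plik θ * prior θ / py
      = (pmlik θ - plik θ) * prior θ / pmy
        + plik θ * prior θ * (py - pmy) / (pmy * py) := by
    field_simp
    ring
  rw [hdecomp]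
  calc |(pmlik θ - plik θ) * prior θ / pmy + plik θ * prior θ * (py - pmy) / (pmy * py)|
      ≤ |(pmlik θ - plik θ) * prior θ / pmy|
        + |plik θ * prior θ * (py - pmy) / (pmy * py)| := abs_add_le _ _
    _ ≤ (plik θ * Cm θ / Real.sqrt m) * prior θ / pmy
        + plik θ * prior θ * (py * C / Real.sqrt m) / (pmy * py) := by
        have e1 : |(pmlik θ - plik θ) * prior θ / pmy|
            = |pmlik θ - plik θ| * prior θ / pmy := by
          rw [abs_div, abs_mul, abs_of_nonneg hr, abs_of_pos hpmy]
        have e2 : |plik θ * prior θ * (py - pmy) / (pmy * py)|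
            = plik θ * prior θ * |pmy - py| / (pmy * py) := by
          rw [abs_div, abs_mul, abs_mul, abs_of_nonneg ha, abs_of_nonneg hr,
            abs_of_pos (mul_pos hpmy hpy), abs_sub_comm]
        rw [e1, e2]
        gcongr ?_ * _ / _ + _ * _ * ?_ / _
        · exact hbound θ
    _ = plik θ * prior θ / py * (1 / Real.sqrt m) * (py / pmy * (Cm θ + C)) := by
        field_simp
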